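/- Let n₁, n₂ ∈ ℝ³ ⊂ ℂ³ be unit vectors with n₁·n₂ = 0, let c ∈ ℂ with c ≠ 0, let ρ ∈ ℂ, and set s = c(n₁ + i n₂) ∈ ℂ³. Then a vector φ ∈ ℂ³ satisfies s·φ = 0 and φ·φ = ρ² if and only if there exist α ∈ ℂ and ε ∈ {1, −1} such that φ = α(n₁ + i n₂) + ε ρ (n₁∧n₂). -/

import Mathlib

noncomputable section

/-- Bilinear dot product on `ℂ³` (no conjugation). -/
def dot3 (s t : Fin 3 → ℂ) : ℂ := s 0 * t 0 + s 1 * t 1 + s 2 * t 2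

/-- Real dot product on `ℝ³`. -/
def dot3R (s t : Fin 3 → ℝ) : ℝ := s 0 * t 0 + s 1 * t 1 + s 2 * t 2

/-- Cross product on `ℂ³`. -/
def cross3 (s t : Fin 3 → ℂ) : Fin 3 → ℂ :=
  ![s 1 * t 2 - s 2 * t 1, s 2 * t 0 - s 0 * t 2, s 0 * t 1 - s 1 * t 0]

/-!
For real orthonormal `x, y` put `w = x + i y` and `z = x ∧ y`. Then `x, y, z` is an orthonormal
frame for the bilinear form, `w·w = 0`, `w·z = 0` and `z·z = 1`. Writing `φ` in the frame, the
condition `w·φ = 0` says exactly that `φ = α w + γ z`, and then `φ·φ = γ²`, so `φ·φ = ρ²`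
means `γ = ±ρ`.
-/

open Matrix Complex

section
variable {R : Type*} [CommRing R]

theorem cross_dot_smul_cross (a b v : Fin 3 → R) :
    (a ⨯₃ b ⬝ᵥ v) • a ⨯₃ b = (a ⬝ᵥ a * b ⬝ᵥ b - a ⬝ᵥ b * a ⬝ᵥ b) • v
      - (b ⬝ᵥ b * a ⬝ᵥ v - a ⬝ᵥ b * b ⬝ᵥ v) • a - (a ⬝ᵥ a * b ⬝ᵥ v - a ⬝ᵥ b * a ⬝ᵥ v) • b := by
  simp_rw [cross_apply, vec3_dotProduct]
  ext i
  fin_cases i <;> simp <;> ring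

theorem eq_dotProduct_smul_add_of_orthonormal {a b : Fin 3 → R} (ha : a ⬝ᵥ a = 1)
    (hb : b ⬝ᵥ b = 1) (hab : a ⬝ᵥ b = 0) (v : Fin 3 → R) :
    v = (a ⬝ᵥ v) • a + (b ⬝ᵥ v) • b + (a ⨯₃ b ⬝ᵥ v) • a ⨯₃ b := by
  rw [cross_dot_smul_cross, ha, hb, hab]
  simp

theorem cross_dot_cross_of_orthonormal {a b : Fin 3 → R} (ha : a ⬝ᵥ a = 1) (hb : b ⬝ᵥ b = 1)
    (hab : a ⬝ᵥ b = 0) : a ⨯₃ b ⬝ᵥ a ⨯₃ b = 1 := by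
  rw [cross_dot_cross, ha, hb, hab]
  ring

variable {n : Type*} [Fintype n] {w z : n → R}

theorem dotProduct_smul_add_smul_of_isotropic (hw : w ⬝ᵥ w = 0) (hwz : w ⬝ᵥ z = 0) (α β : R) :
    w ⬝ᵥ (α • w + β • z) = 0 := by
  simp [hw, hwz]

theorem dotProduct_self_smul_add_smul_of_isotropic (hw : w ⬝ᵥ w = 0) (hwz : w ⬝ᵥ z = 0)
    (hz : z ⬝ᵥ z = 1) (α β : R) : (α • w + β • z) ⬝ᵥ (α • w + β • z) = β ^ 2 := by
  simp only [dotProduct_add, add_dotProduct, dotProduct_smul, smul_dotProduct, smul_eq_mul,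
    dotProduct_comm z w, hw, hwz, hz]
  ring

end

section
variable {x y : Fin 3 → ℂ}

theorem dotProduct_self_add_I_smul (hx : x ⬝ᵥ x = 1) (hy : y ⬝ᵥ y = 1) (hxy : x ⬝ᵥ y = 0) :
    (x + I • y) ⬝ᵥ (x + I • y) = 0 := by
  simp only [add_dotProduct, dotProduct_add, smul_dotProduct, dotProduct_smul,
    dotProduct_comm y x, hx, hy, hxy, smul_eq_mul]
  linear_combination I_sq

theorem add_I_smul_dotProduct_cross (x y : Fin 3 → ℂ) : (x + I • y) ⬝ᵥ x ⨯₃ y = 0 := by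
  simp [add_dotProduct, dot_self_cross, dot_cross_self]

theorem eq_smul_add_smul_cross_of_dotProduct_eq_zero (hx : x ⬝ᵥ x = 1) (hy : y ⬝ᵥ y = 1)
    (hxy : x ⬝ᵥ y = 0) {φ : Fin 3 → ℂ} (h : (x + I • y) ⬝ᵥ φ = 0) :
    φ = (x ⬝ᵥ φ) • (x + I • y) + (x ⨯₃ y ⬝ᵥ φ) • x ⨯₃ y := by
  have hy' : y ⬝ᵥ φ = I * x ⬝ᵥ φ := by
    rw [add_dotProduct, smul_dotProduct, smul_eq_mul] at h
    linear_combination -I * h + y ⬝ᵥ φ * I_sq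
  conv_lhs =>
    rw [eq_dotProduct_smul_add_of_orthonormal hx hy hxy φ, hy', mul_comm I, mul_smul, ← smul_add]

theorem dotProduct_eq_zero_and_self_eq_sq_iff (hx : x ⬝ᵥ x = 1) (hy : y ⬝ᵥ y = 1)
    (hxy : x ⬝ᵥ y = 0) (ρ : ℂ) (φ : Fin 3 → ℂ) :
    (x + I • y) ⬝ᵥ φ = 0 ∧ φ ⬝ᵥ φ = ρ ^ 2 ↔
      ∃ α ε : ℂ, (ε = 1 ∨ ε = -1) ∧ φ = α • (x + I • y) + (ε * ρ) • x ⨯₃ y := by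
  have hw := dotProduct_self_add_I_smul hx hy hxy
  have hwz := add_I_smul_dotProduct_cross x y
  have hz := cross_dot_cross_of_orthonormal hx hy hxy
  constructor
  · rintro ⟨hφ, hρ⟩
    have hdecomp := eq_smul_add_smul_cross_of_dotProduct_eq_zero hx hy hxy hφ
    rw [hdecomp, dotProduct_self_smul_add_smul_of_isotropic hw hwz hz,
      sq_eq_sq_iff_eq_or_eq_neg] at hρ
    refine ⟨x ⬝ᵥ φ, ?_⟩
    rcases hρ with hρ | hρ
    · exact ⟨1, Or.inl rfl, by rwa [one_mul, ← hρ]⟩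
    · exact ⟨-1, Or.inr rfl, by rwa [neg_one_mul, ← hρ]⟩
  · rintro ⟨α, ε, hε, rfl⟩
    refine ⟨dotProduct_smul_add_smul_of_isotropic hw hwz _ _, ?_⟩
    rw [dotProduct_self_smul_add_smul_of_isotropic hw hwz hz, mul_pow]
    rcases hε with rfl | rfl <;> simp

end

theorem dot3_eq_dotProduct (s t : Fin 3 → ℂ) : dot3 s t = s ⬝ᵥ t := by
  rw [dot3, vec3_dotProduct]

theorem ofReal_dotProduct_ofReal (u v : Fin 3 → ℝ) :
    (fun i => (u i : ℂ)) ⬝ᵥ (fun i => (v i : ℂ)) = dot3R u v := by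
  rw [dot3R, ← vec3_dotProduct, ← ofRealHom_eq_coe, RingHom.map_dotProduct]
  rfl

/-- Characterization of the vectors `φ` with `s·φ = 0` and `φ·φ = ρ²`, where
`s = c(n₁ + i n₂)` with `n₁, n₂` real orthonormal and `c ≠ 0`. -/
theorem phi_characterization
    (n₁ n₂ : Fin 3 → ℝ)
    (hn₁ : dot3R n₁ n₁ = 1) (hn₂ : dot3R n₂ n₂ = 1) (hn₁₂ : dot3R n₁ n₂ = 0)
    (c : ℂ) (hc : c ≠ 0) (ρ : ℂ)
    (s : Fin 3 → ℂ) (hs : s = fun i => c * ((n₁ i : ℂ) + Complex.I * (n₂ i : ℂ)))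
    (φ : Fin 3 → ℂ) :
    (dot3 s φ = 0 ∧ dot3 φ φ = ρ ^ 2) ↔
      ∃ (α ε : ℂ), (ε = 1 ∨ ε = -1) ∧
        φ = (fun i => α * ((n₁ i : ℂ) + Complex.I * (n₂ i : ℂ)))
            + (ε * ρ) • cross3 (fun i => (n₁ i : ℂ)) (fun i => (n₂ i : ℂ)) := by
  have hs' : s = c • ((fun i => (n₁ i : ℂ)) + I • fun i => (n₂ i : ℂ)) := hs
  have hx := ofReal_dotProduct_ofReal n₁ n₁
  have hy := ofReal_dotProduct_ofReal n₂ n₂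
  have hxy := ofReal_dotProduct_ofReal n₁ n₂
  rw [hn₁, ofReal_one] at hx
  rw [hn₂, ofReal_one] at hy
  rw [hn₁₂, ofReal_zero] at hxy
  rw [dot3_eq_dotProduct, dot3_eq_dotProduct, hs', smul_dotProduct, smul_eq_mul, mul_eq_zero,
    or_iff_right hc]
  exact dotProduct_eq_zero_and_self_eq_sq_iff hx hy hxy ρ φ

end
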